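/- Let μ_α(A) := H_α(E ∩ A) for a set E ⊆ ℝⁿ with H_α(E) < ∞, and suppose k := inf_{x∈E} liminf_{r→0} (2r)^{-α} μ_α(B_r(x)) satisfies 0 < k < ∞. Then P^α(E) ≤ H_α(E)/k < ∞. -/

import Mathlib

open Metric Set MeasureTheory Filter ENNReal

/-- The quantity `P^s_ε(A)`: the supremum of `Σ (2 r_k)^s` over all packings of `A`,
i.e. collections of pairwise disjoint open balls with centres in `A` and radii
`0 < r_k ≤ ε/2`. -/
noncomputable def prePackingAux {X : Type*} [MetricSpace X] (s ε : ℝ) (A : Set X) : ℝ≥0∞ :=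
  ⨆ (t : Finset (X × ℝ)) (_ : ∀ p ∈ t, p.1 ∈ A ∧ 0 < p.2 ∧ p.2 ≤ ε / 2)
    (_ : (t : Set (X × ℝ)).Pairwise fun p q =>
      Disjoint (Metric.ball p.1 p.2) (Metric.ball q.1 q.2)),
    ∑ p ∈ t, ENNReal.ofReal ((2 * p.2) ^ s)

/-- The packing premeasure `P^s_0(A) = lim_{ε ↓ 0} P^s_ε(A)`; since `ε ↦ P^s_ε(A)` is
nondecreasing, the limit is the infimum over `ε > 0`. -/
noncomputable def prePacking {X : Type*} [MetricSpace X] (s : ℝ) (A : Set X) : ℝ≥0∞ :=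
  ⨅ (ε : ℝ) (_ : 0 < ε), prePackingAux s ε A

/-- The packing `s`-measure `P^s(A) = inf {Σ_i P^s_0(A_i) : A = ∪_i A_i}`. -/
noncomputable def packingMeasure {X : Type*} [MetricSpace X] (s : ℝ) (A : Set X) : ℝ≥0∞ :=
  ⨅ (c : ℕ → Set X) (_ : A ⊆ ⋃ i, c i), ∑' i, prePacking s (c i)

/-! Fix `c < k` and put `ν = μH[α]` restricted to `E`, a finite Borel measure. Every point of `E`
lies in a measurable set on which `ν (ball x r) ≥ c (2r)^α` for all small `r`. For `A` inside such
a set, the balls of an `ε`-packing of `A` are disjoint and lie in the `ε`-thickening of `A`, so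
`c P_0(A) ≤ ν (closure A)`. Cutting an open `U ⊇ A` into countably many pieces with `ν`-null
frontiers makes the closures free, so `c P(A) ≤ ν U`, hence `c P(A) ≤ ν A` by outer regularity.
Summing over a measurable partition of `E` gives `c P(E) ≤ μH[α] E`; then let `c ↑ k`. -/

open scoped Topology

section PackingMeasure

variable {X : Type*} [MetricSpace X]

theorem prePacking_empty (s : ℝ) : prePacking s (∅ : Set X) = 0 := by
  refine nonpos_iff_eq_zero.1
    (iInf₂_le_of_le 1 one_pos (iSup_le fun t => iSup₂_le fun ht _ => ?_))
  rw [Finset.eq_empty_of_forall_notMem fun p hp => notMem_empty _ (ht p hp).1, Finset.sum_empty]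

theorem packingMeasure_eq_ofFunction (s : ℝ) :
    packingMeasure (X := X) s = OuterMeasure.ofFunction (prePacking s) (prePacking_empty s) :=
  rfl

theorem packingMeasure_le_tsum_of_subset_iUnion {s : ℝ} {A : Set X} {B : ℕ → Set X}
    (h : A ⊆ ⋃ i, B i) : packingMeasure s A ≤ ∑' i, packingMeasure s (B i) := by
  rw [packingMeasure_eq_ofFunction]
  exact (measure_mono h).trans (measure_iUnion_le B)

end PackingMeasure

theorem Monotone.le_of_forall_rat_le {f m : ℝ → ℝ≥0∞} {a r : ℝ} (hm : Monotone m)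
    (hf : ContinuousAt f r) (har : a < r) (h : ∀ q : ℚ, (q : ℝ) ∈ Ioo a r → f q ≤ m q) :
    f r ≤ m r := by
  by_contra! hlt
  have hev : ∀ᶠ s in 𝓝[<] r, m r < f s ∧ s ∈ Ioo a r :=
    ((hf.eventually (lt_mem_nhds hlt)).filter_mono nhdsWithin_le_nhds).and (Ioo_mem_nhdsLT har)
  obtain ⟨b, hbr : b < r, hsub⟩ := mem_nhdsLT_iff_exists_Ioo_subset.1 hev
  obtain ⟨q, hbq, hqr⟩ := exists_rat_btwn hbr
  obtain ⟨hq, hqar⟩ := hsub ⟨hbq, hqr⟩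
  exact (hq.trans_le ((h q hqar).trans (hm hqr.le))).false

section LowerDensity

variable {X : Type*} [MetricSpace X] [MeasurableSpace X]

def lowerDensitySet (ν : Measure X) (α : ℝ) (c : ℝ≥0∞) (R : ℝ) : Set X :=
  {x | ∀ r ∈ Ioo 0 R, c * ENNReal.ofReal ((2 * r) ^ α) ≤ ν (ball x r)}

theorem measurable_measure_ball [SecondCountableTopology X] [OpensMeasurableSpace X]
    (ν : Measure X) [SFinite ν] (r : ℝ) : Measurable fun x => ν (ball x r) :=
  measurable_measure_prodMk_left
    (measurableSet_lt (measurable_dist.comp measurable_swap) measurable_const)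

theorem continuousAt_mul_ofReal_rpow (c : ℝ≥0∞) (α : ℝ) {r : ℝ} (hr : 0 < r) :
    ContinuousAt (fun r : ℝ => c * ENNReal.ofReal ((2 * r) ^ α)) r := by
  have hpos : 0 < 2 * r := by positivity
  refine (ENNReal.continuousAt_const_mul
    (Or.inr (ENNReal.ofReal_pos.2 (Real.rpow_pos_of_pos hpos α)).ne')).comp
      (f := fun r : ℝ => ENNReal.ofReal ((2 * r) ^ α)) ?_
  exact ENNReal.continuous_ofReal.continuousAt.comp
    ((continuousAt_const.mul continuousAt_id).rpow_const (Or.inl hpos.ne'))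

theorem measurableSet_lowerDensitySet [SecondCountableTopology X] [OpensMeasurableSpace X]
    (ν : Measure X) [SFinite ν] (α : ℝ) (c : ℝ≥0∞) (R : ℝ) :
    MeasurableSet (lowerDensitySet ν α c R) := by
  have hrat : lowerDensitySet ν α c R = ⋂ (q : ℚ) (_ : (q : ℝ) ∈ Ioo 0 R),
      {x | c * ENNReal.ofReal ((2 * q) ^ α) ≤ ν (ball x q)} := by
    ext x
    simp only [lowerDensitySet, mem_ofPred_eq, mem_iInter]
    refine ⟨fun hx q hq => hx q hq, fun hx r hr => ?_⟩
    have hmono : Monotone fun r => ν (ball x r) := fun _ _ h => measure_mono (ball_subset_ball h)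
    exact hmono.le_of_forall_rat_le (continuousAt_mul_ofReal_rpow c α hr.1) hr.1
      fun q hq => hx q ⟨hq.1, hq.2.trans hr.2⟩
  rw [hrat]
  exact .iInter fun q => .iInter fun _ =>
    measurableSet_le measurable_const (measurable_measure_ball ν q)

theorem exists_pos_mem_lowerDensitySet {ν : Measure X} {α : ℝ} {c : ℝ≥0∞} {x : X}
    (hx : c < liminf (fun r : ℝ => ν (ball x r) / ENNReal.ofReal ((2 * r) ^ α)) (𝓝[>] 0)) :
    ∃ R > 0, x ∈ lowerDensitySet ν α c R := by
  obtain ⟨R, hR, hsub⟩ := mem_nhdsGT_iff_exists_Ioo_subset.1 (eventually_lt_of_lt_liminf hx)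
  refine ⟨R, hR, fun r hr => ?_⟩
  have hpos : ENNReal.ofReal ((2 * r) ^ α) ≠ 0 :=
    (ENNReal.ofReal_pos.2 (Real.rpow_pos_of_pos (by linarith [hr.1]) α)).ne'
  exact (ENNReal.le_div_iff_mul_le (Or.inl hpos) (Or.inl ENNReal.ofReal_ne_top)).1 (hsub hr).le

end LowerDensity

section PackingBound

variable {X : Type*} [MetricSpace X] [MeasurableSpace X] [OpensMeasurableSpace X]
  {ν : Measure X} {α : ℝ} {c : ℝ≥0∞} {R : ℝ} {A : Set X}

theorem mul_prePackingAux_le_measure_thickening {ε : ℝ} (hA : A ⊆ lowerDensitySet ν α c R)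
    (hε : 0 < ε) (hεR : ε ≤ R) :
    c * prePackingAux α ε A ≤ ν (thickening ε A) := by
  simp only [prePackingAux, ENNReal.mul_iSup, iSup_le_iff]
  intro t ht hdisj
  calc c * ∑ p ∈ t, ENNReal.ofReal ((2 * p.2) ^ α)
      = ∑ p ∈ t, c * ENNReal.ofReal ((2 * p.2) ^ α) := Finset.mul_sum _ _ _
    _ ≤ ∑ p ∈ t, ν (ball p.1 p.2) := Finset.sum_le_sum fun p hp =>
        hA (ht p hp).1 p.2 ⟨(ht p hp).2.1, by linarith [(ht p hp).2.2]⟩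
    _ = ν (⋃ p ∈ t, ball p.1 p.2) :=
        (measure_biUnion_finset hdisj fun _ _ => measurableSet_ball).symm
    _ ≤ ν (thickening ε A) := measure_mono <| iUnion₂_subset fun p hp =>
        (ball_subset_ball (by linarith [(ht p hp).2.2])).trans
          (ball_subset_thickening (ht p hp).1 ε)

theorem mul_prePacking_le_measure_closure [IsFiniteMeasure ν]
    (hA : A ⊆ lowerDensitySet ν α c R) (hR : 0 < R) :
    c * prePacking α A ≤ ν (closure A) := by
  refine ge_of_tendsto (tendsto_measure_thickening ⟨1, one_pos, measure_ne_top ν _⟩) ?_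
  filter_upwards [Ioo_mem_nhdsGT hR] with ε hε
  calc c * prePacking α A ≤ c * prePackingAux α ε A := by
        gcongr
        exact iInf₂_le ε hε.1
    _ ≤ ν (thickening ε A) := mul_prePackingAux_le_measure_thickening hA hε.1 hε.2.le

end PackingBound

theorem IsOpen.exists_iUnion_eq_null_frontier {X : Type*} [MetricSpace X] [MeasurableSpace X]
    [OpensMeasurableSpace X] {V : Set X} (hV : IsOpen V) (ν : Measure X) [SFinite ν] :
    ∃ S : ℕ → Set X, (∀ n, IsOpen (S n)) ∧ (∀ n, ν (frontier (S n)) = 0) ∧ ⋃ n, S n = V := by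
  obtain ⟨r, hr0, hr⟩ := exists_null_frontiers_thickening ν Vᶜ
  refine ⟨fun n => (closure (thickening (r n) Vᶜ))ᶜ, fun n => isClosed_closure.isOpen_compl,
    fun n => ?_, ?_⟩
  · rw [frontier_compl]
    exact measure_mono_null frontier_closure_subset (hr n).2
  refine Subset.antisymm (iUnion_subset fun n => ?_) fun x hx => ?_
  · exact compl_subset_comm.1 ((self_subset_thickening (hr n).1 _).trans subset_closure)
  · have hxF : x ∉ ⋂ δ > 0, cthickening δ Vᶜ := by
      rwa [← closure_eq_iInter_cthickening, hV.isClosed_compl.closure_eq, notMem_compl_iff]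
    simp only [mem_iInter, not_forall] at hxF
    obtain ⟨δ, hδ, hxδ⟩ := hxF
    obtain ⟨n, hn⟩ := (hr0.eventually (gt_mem_nhds hδ)).exists
    exact mem_iUnion.2 ⟨n, fun hxn => hxδ
      (cthickening_mono hn.le _ (closure_thickening_subset_cthickening _ _ hxn))⟩

theorem null_frontier_disjointed {X : Type*} [TopologicalSpace X] [MeasurableSpace X]
    {ν : Measure X} {S : ℕ → Set X}
    (hS : ∀ n, ν (frontier (S n)) = 0) (n : ℕ) : ν (frontier (disjointed S n)) = 0 := by
  refine disjointedRec (p := fun t => ν (frontier t) = 0) (fun t i ht => ?_) (hS n)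
  rw [sdiff_eq]
  exact null_frontier_inter ht (by rw [frontier_compl]; exact hS i)

section PackingMeasureBound

variable {X : Type*} [MetricSpace X] [MeasurableSpace X] [BorelSpace X]
  {ν : Measure X} [IsFiniteMeasure ν] {α : ℝ} {c : ℝ≥0∞}

theorem mul_packingMeasure_le_measure_of_subset_lowerDensitySet {R : ℝ} {A : Set X}
    (hA : A ⊆ lowerDensitySet ν α c R) (hR : 0 < R) :
    c * packingMeasure α A ≤ ν A := by
  rw [A.measure_eq_iInf_isOpen]
  refine le_iInf₂ fun U hAU => le_iInf fun hU => ?_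
  obtain ⟨S, hSopen, hSnull, hSU⟩ := hU.exists_iUnion_eq_null_frontier ν
  have hcover : A ⊆ ⋃ n, A ∩ disjointed S n := by
    rw [← inter_iUnion, iUnion_disjointed, hSU]
    exact subset_inter subset_rfl hAU
  calc c * packingMeasure α A ≤ c * ∑' n, prePacking α (A ∩ disjointed S n) := by
        gcongr
        exact iInf₂_le (fun n => A ∩ disjointed S n) hcover
    _ = ∑' n, c * prePacking α (A ∩ disjointed S n) := ENNReal.tsum_mul_left.symm
    _ ≤ ∑' n, ν (closure (A ∩ disjointed S n)) := ENNReal.tsum_le_tsum fun n =>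
        mul_prePacking_le_measure_closure (inter_subset_left.trans hA) hR
    _ ≤ ∑' n, ν (disjointed S n) := ENNReal.tsum_le_tsum fun n =>
        (measure_mono (closure_mono inter_subset_right)).trans
          (measure_closure_of_null_frontier (null_frontier_disjointed hSnull n)).le
    _ = ν U := by
        rw [← measure_iUnion (disjoint_disjointed S)
          (.disjointed fun n => (hSopen n).measurableSet), iUnion_disjointed, hSU]

theorem mul_packingMeasure_le_measure [SecondCountableTopology X] {E : Set X}
    (hE : ∀ x ∈ E, ∃ R > 0, x ∈ lowerDensitySet ν α c R) :
    c * packingMeasure α E ≤ ν E := by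
  set G : ℕ → Set X := fun m => lowerDensitySet ν α c (1 / ((m : ℝ) + 1))
  set A : ℕ → Set X := fun m => toMeasurable ν E ∩ disjointed G m
  have hA : ∀ m, MeasurableSet (A m) := fun m => (measurableSet_toMeasurable ν E).inter
    (.disjointed (fun m => measurableSet_lowerDensitySet ν α c _) m)
  have hcover : E ⊆ ⋃ m, A m := by
    intro x hx
    obtain ⟨R, hR, hxR⟩ := hE x hx
    obtain ⟨m, hm⟩ := exists_nat_one_div_lt hR
    have hxG : x ∈ ⋃ m, G m := mem_iUnion.2 ⟨m, fun r hr => hxR r ⟨hr.1, hr.2.trans hm⟩⟩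
    rw [← inter_iUnion, iUnion_disjointed]
    exact ⟨subset_toMeasurable ν E hx, hxG⟩
  calc c * packingMeasure α E ≤ c * ∑' m, packingMeasure α (A m) := by
        gcongr
        exact packingMeasure_le_tsum_of_subset_iUnion hcover
    _ = ∑' m, c * packingMeasure α (A m) := ENNReal.tsum_mul_left.symm
    _ ≤ ∑' m, ν (A m) := ENNReal.tsum_le_tsum fun m =>
        mul_packingMeasure_le_measure_of_subset_lowerDensitySet
          (inter_subset_right.trans (disjointed_subset G m)) (by positivity)
    _ = ν (⋃ m, A m) := (measure_iUnion
        (fun i j hij => ((disjoint_disjointed G) hij).mono inter_subset_right inter_subset_right)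
        hA).symm
    _ ≤ ν E := by
        rw [← measure_toMeasurable E]
        exact measure_mono (iUnion_subset fun m => inter_subset_left)

end PackingMeasureBound

theorem packingMeasure_le_hausdorff_div_lower_density_general (n : ℕ) (α : ℝ)
    (E : Set (EuclideanSpace ℝ (Fin n))) (hEfin : μH[α] E < ⊤)
    (k : ℝ≥0∞)
    (hk : k = ⨅ x ∈ E, liminf (fun r : ℝ =>
      μH[α] (E ∩ Metric.ball x r) / ENNReal.ofReal ((2 * r) ^ α))
      (nhdsWithin 0 (Set.Ioi 0)))
    (hk0 : 0 < k) :
    packingMeasure α E ≤ μH[α] E / k ∧ μH[α] E / k < ⊤ := by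
  set ν := (μH[α]).restrict E
  have : IsFiniteMeasure ν := isFiniteMeasure_restrict.2 hEfin.ne
  have hdensity : ∀ x ∈ E,
      k ≤ liminf (fun r : ℝ => ν (ball x r) / ENNReal.ofReal ((2 * r) ^ α)) (𝓝[>] 0) := by
    intro x hx
    simp only [ν, Measure.restrict_apply measurableSet_ball, inter_comm _ E]
    exact hk ▸ iInf₂_le x hx
  have hkP : k * packingMeasure α E ≤ μH[α] E := by
    refine ENNReal.mul_le_of_forall_lt fun c hc d hd => ?_
    calc c * d ≤ c * packingMeasure α E := by gcongr
      _ ≤ ν E := mul_packingMeasure_le_measure fun x hx =>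
          exists_pos_mem_lowerDensitySet (hc.trans_le (hdensity x hx))
      _ = μH[α] E := Measure.restrict_apply_self _ E
  refine ⟨(ENNReal.le_div_iff_mul_le (Or.inl hk0.ne') (Or.inr hEfin.ne)).2 ?_,
    ENNReal.div_lt_top hEfin.ne hk0.ne'⟩
  rwa [mul_comm]

theorem packingMeasure_le_hausdorff_div_lower_density (n : ℕ) (α : ℝ) (hα : 0 ≤ α)
    (E : Set (EuclideanSpace ℝ (Fin n))) (hEfin : μH[α] E < ⊤)
    (k : ℝ≥0∞)
    (hk : k = ⨅ x ∈ E, liminf (fun r : ℝ =>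
      μH[α] (E ∩ Metric.ball x r) / ENNReal.ofReal ((2 * r) ^ α))
      (nhdsWithin 0 (Set.Ioi 0)))
    (hk0 : 0 < k) (hktop : k < ⊤) :
    packingMeasure α E ≤ μH[α] E / k ∧ μH[α] E / k < ⊤ :=
  packingMeasure_le_hausdorff_div_lower_density_general n α E hEfin k hk hk0
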